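/- Let n ≥ 7 with n ≡ 1 or 3 (mod 6), let H be a Steiner triple system S(2,3,n) on vertices {u_1,...,u_n}, and let G arise from H by replacing each hyperedge e = {u_x,u_y,u_z} with four new vertices v_x^e, v_y^e, v_z^e, w^e and the six edges u_x v_x^e, u_y v_y^e, u_z v_z^e, v_x^e w^e, v_y^e w^e, v_z^e w^e. Then every majority additive k-coloring c of G assigns pairwise distinct colors to u_1,...,u_n; consequently χ_mac(G) ≥ n = 2Δ(G)+1. -/

import Mathlib

open SimpleGraph Finset

/-- The induced sum function `s_c(v) = ∑_{w ∈ N_G(v)} c(w)`. -/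
def sc {W : Type*} [Fintype W] (G : SimpleGraph W) [DecidableRel G.Adj] (c : W → ℕ) (v : W) : ℕ :=
  ∑ w ∈ G.neighborFinset v, c w

/-- `c` is a majority additive `k`-coloring of `G`. -/
def IsMAC {W : Type*} [Fintype W] (G : SimpleGraph W) [DecidableRel G.Adj] (k : ℕ) (c : W → ℕ) :
    Prop :=
  (∀ v, c v ∈ Finset.Icc 1 k) ∧
  ∀ u : W, 2 ≤ G.degree u → ∀ s : ℕ,
    2 * ((G.neighborFinset u).filter (fun v => sc G c v = s)).card ≤ G.degree u

/-- Vertex type of the graph built from a Steiner triple system with hyperedge set `E`: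
the original points `u_x`, the vertices `v_x^e` (encoded as pairs of a hyperedge `e ∈ E`
and a point `x ∈ e`), and the vertices `w^e` (one for each hyperedge `e ∈ E`). -/
def StsVert {n : ℕ} (E : Finset (Finset (Fin n))) : Type :=
  Fin n ⊕ ((Σ e : {e // e ∈ E}, {x : Fin n // x ∈ e.val}) ⊕ {e // e ∈ E})

instance {n : ℕ} (E : Finset (Finset (Fin n))) : Fintype (StsVert E) := by
  unfold StsVert; infer_instance

instance {n : ℕ} (E : Finset (Finset (Fin n))) : DecidableEq (StsVert E) := by
  unfold StsVert; infer_instance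

/-- One-sided adjacency: `u_x ~ v_x^e` and `v_x^e ~ w^e`. -/
def stsAdjFun {n : ℕ} (E : Finset (Finset (Fin n))) : StsVert E → StsVert E → Bool :=
  fun a b =>
    match a, b with
    | Sum.inl x, Sum.inr (Sum.inl ⟨_, y⟩) => decide (x = y.val)
    | Sum.inr (Sum.inl ⟨e, _⟩), Sum.inr (Sum.inr e') => decide (e = e')
    | _, _ => false

/-- The graph arising from the Steiner triple system with hyperedge set `E` by replacing
every hyperedge `e = {u_x, u_y, u_z}` by the new vertices `v_x^e, v_y^e, v_z^e, w^e` and the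
six edges `u_x v_x^e, u_y v_y^e, u_z v_z^e, v_x^e w^e, v_y^e w^e, v_z^e w^e`. -/
def stsGraph {n : ℕ} (E : Finset (Finset (Fin n))) : SimpleGraph (StsVert E) :=
  SimpleGraph.fromRel (fun a b => stsAdjFun E a b = true)

instance {n : ℕ} (E : Finset (Finset (Fin n))) : DecidableRel (stsGraph E).Adj :=
  fun a b => decidable_of_iff _ (SimpleGraph.fromRel_adj _ a b).symm

instance stsNbrFintypeU {n : ℕ} (E : Finset (Finset (Fin n))) (x : Fin n) :
    Fintype ((stsGraph E).neighborSet (Sum.inl x)) :=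
  SimpleGraph.neighborSetFintype (stsGraph E) (Sum.inl x)

instance stsNbrFintypeV {n : ℕ} (E : Finset (Finset (Fin n)))
    (p : Σ e : {e // e ∈ E}, {x : Fin n // x ∈ e.val}) :
    Fintype ((stsGraph E).neighborSet (Sum.inr (Sum.inl p))) :=
  SimpleGraph.neighborSetFintype (stsGraph E) (Sum.inr (Sum.inl p))

instance stsNbrFintypeW {n : ℕ} (E : Finset (Finset (Fin n))) (e : {e // e ∈ E}) :
    Fintype ((stsGraph E).neighborSet (Sum.inr (Sum.inr e))) :=
  SimpleGraph.neighborSetFintype (stsGraph E) (Sum.inr (Sum.inr e))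

variable {n : ℕ} {E : Finset (Finset (Fin n))}

@[simp] lemma sv_ll {x y : Fin n} : @Eq (StsVert E) (Sum.inl x) (Sum.inl y) ↔ x = y :=
  ⟨fun h => Sum.inl.inj h, fun h => by rw [h]⟩
@[simp] lemma sv_rr {a b : (Σ e : {e // e ∈ E}, {z : Fin n // z ∈ e.val}) ⊕ {e // e ∈ E}} :
    @Eq (StsVert E) (Sum.inr a) (Sum.inr b) ↔ a = b :=
  ⟨fun h => Sum.inr.inj h, fun h => by rw [h]⟩
@[simp] lemma sv_lr {x : Fin n} {a} : @Eq (StsVert E) (Sum.inl x) (Sum.inr a) ↔ False :=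
  ⟨fun h => Sum.inl_ne_inr h, False.elim⟩
@[simp] lemma sv_rl {x : Fin n} {a} : @Eq (StsVert E) (Sum.inr a) (Sum.inl x) ↔ False :=
  ⟨fun h => Sum.inr_ne_inl h, False.elim⟩

lemma adj_iff (a b : StsVert E) :
    (stsGraph E).Adj a b ↔ a ≠ b ∧ (stsAdjFun E a b = true ∨ stsAdjFun E b a = true) :=
  SimpleGraph.fromRel_adj _ a b

lemma nbhd_V (e : {e // e ∈ E}) (y : {x : Fin n // x ∈ e.val}) :
    (stsGraph E).neighborFinset (Sum.inr (Sum.inl ⟨e, y⟩)) =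
      {Sum.inl y.val, Sum.inr (Sum.inr e)} := by
  ext a
  erw [SimpleGraph.mem_neighborFinset, adj_iff, mem_insert, mem_singleton]
  rcases a with x | (⟨e', y'⟩ | e') <;> simp [stsAdjFun, eq_comm, Sigma.ext_iff] <;> aesop

lemma nbhd_W (e : {e // e ∈ E}) :
    (stsGraph E).neighborFinset (Sum.inr (Sum.inr e)) =
      (Finset.univ : Finset {x : Fin n // x ∈ e.val}).image
        (fun y => Sum.inr (Sum.inl ⟨e, y⟩)) := by
  ext a
  erw [SimpleGraph.mem_neighborFinset, adj_iff, Finset.mem_image]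
  rcases a with x | (⟨e', y'⟩ | e') <;> simp [stsAdjFun, eq_comm, Sigma.ext_iff] <;> aesop

lemma nbhd_U (x : Fin n) :
    (stsGraph E).neighborFinset (Sum.inl x) =
      ((Finset.univ : Finset (Σ e : {e // e ∈ E}, {z : Fin n // z ∈ e.val})).filter
        (fun p => p.2.val = x)).image (fun p => Sum.inr (Sum.inl p)) := by
  ext a
  erw [SimpleGraph.mem_neighborFinset, adj_iff, Finset.mem_image]
  rcases a with x' | (⟨e', y'⟩ | e') <;> simp [stsAdjFun, eq_comm, Sigma.ext_iff] <;> aesop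

lemma degree_V (e : {e // e ∈ E}) (y : {x : Fin n // x ∈ e.val}) :
    (stsGraph E).degree (Sum.inr (Sum.inl ⟨e, y⟩)) = 2 := by
  erw [← SimpleGraph.card_neighborFinset_eq_degree, nbhd_V,
    Finset.card_insert_of_notMem (fun h => Sum.inl_ne_inr (Finset.mem_singleton.mp h)),
    Finset.card_singleton]

lemma sc_V (c : StsVert E → ℕ) (e : {e // e ∈ E}) (y : {x : Fin n // x ∈ e.val}) :
    sc (stsGraph E) c (Sum.inr (Sum.inl ⟨e, y⟩)) =
      c (Sum.inl y.val) + c (Sum.inr (Sum.inr e)) := by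
  erw [sc, nbhd_V, Finset.sum_pair Sum.inl_ne_inr]

lemma V_inj (e : {e // e ∈ E}) : Function.Injective
    (fun y : {x : Fin n // x ∈ e.val} => (Sum.inr (Sum.inl ⟨e, y⟩) : StsVert E)) := by
  intro a b h; simpa using h

lemma degree_W (e : {e // e ∈ E}) :
    (stsGraph E).degree (Sum.inr (Sum.inr e)) = e.val.card := by
  erw [← SimpleGraph.card_neighborFinset_eq_degree, nbhd_W,
    Finset.card_image_of_injective _ (V_inj e), Finset.card_univ, Fintype.card_coe]

lemma degree_U (x : Fin n) :
    (stsGraph E).degree (Sum.inl x) = (E.filter (fun e => x ∈ e)).card := by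
  erw [← SimpleGraph.card_neighborFinset_eq_degree, nbhd_U,
    Finset.card_image_of_injective _ (fun a b h => by simpa using h)]
  apply Finset.card_bij (fun p _ => p.1.val)
  · rintro ⟨⟨e, he⟩, ⟨z, hz⟩⟩ hp
    simp only [mem_filter, mem_univ, true_and] at hp
    subst hp
    simp [he, hz]
  · rintro ⟨⟨e1, he1⟩, ⟨z1, hz1⟩⟩ hp ⟨⟨e2, he2⟩, ⟨z2, hz2⟩⟩ hq h
    simp only [mem_filter, mem_univ, true_and] at hp hq
    simp only at h
    subst h; subst hp; subst hq; rfl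
  · intro e he
    simp only [mem_filter] at he
    exact ⟨⟨⟨e, he.1⟩, ⟨x, he.2⟩⟩, by simp, rfl⟩

lemma count_edges (hcard : ∀ e ∈ E, e.card = 3)
    (hpair : ∀ x y : Fin n, x ≠ y → ∃! e, e ∈ E ∧ x ∈ e ∧ y ∈ e) (x : Fin n) :
    2 * (E.filter (fun e => x ∈ e)).card = n - 1 := by
  classical
  have h : (Finset.univ.erase x) = (E.filter (fun e => x ∈ e)).biUnion (fun e => e.erase x) := by
    ext y
    simp only [mem_erase, mem_univ, mem_biUnion, mem_filter, and_true]
    constructor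
    · intro hy
      obtain ⟨e, ⟨he, hx, hyy⟩, -⟩ := hpair x y (Ne.symm hy)
      exact ⟨e, ⟨he, hx⟩, by simp [mem_erase, hy, hyy]⟩
    · rintro ⟨e, ⟨he, hx⟩, hy⟩
      exact hy.1
  have hdisj : ∀ e ∈ E.filter (fun e => x ∈ e), ∀ f ∈ E.filter (fun e => x ∈ e), e ≠ f →
      Disjoint (e.erase x) (f.erase x) := by
    intro e he f hf hef
    simp only [mem_filter] at he hf
    rw [Finset.disjoint_left]
    intro y hye hyf
    rw [mem_erase] at hye hyf
    obtain ⟨g, hg, hu⟩ := hpair x y (Ne.symm hye.1)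
    exact hef ((hu e ⟨he.1, he.2, hye.2⟩).trans (hu f ⟨hf.1, hf.2, hyf.2⟩).symm)
  have hbu := Finset.card_biUnion hdisj
  rw [← h] at hbu
  have hc : ∀ e ∈ E.filter (fun e => x ∈ e), (e.erase x).card = 2 := by
    intro e he
    rw [mem_filter] at he
    rw [Finset.card_erase_of_mem he.2, hcard e he.1]
  rw [Finset.sum_congr rfl hc, Finset.sum_const, smul_eq_mul,
    Finset.card_erase_of_mem (mem_univ x), Finset.card_univ, Fintype.card_fin] at hbu
  omega

theorem stmt7 (n : ℕ) (hn : 7 ≤ n) (hmod : n % 6 = 1 ∨ n % 6 = 3)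
    (E : Finset (Finset (Fin n)))
    (hcard : ∀ e ∈ E, e.card = 3)
    (hpair : ∀ x y : Fin n, x ≠ y → ∃! e : Finset (Fin n), e ∈ E ∧ x ∈ e ∧ y ∈ e) :
    (∀ (k : ℕ) (c : StsVert E → ℕ), IsMAC (stsGraph E) k c →
        (Function.Injective (fun x : Fin n => c (Sum.inl x)) ∧ n ≤ k)) ∧
      n = 2 * (stsGraph E).maxDegree + 1 := by
  constructor
  · intro k c hmac
    have hinj : Function.Injective (fun x : Fin n => c (Sum.inl x)) := by
      intro x y hxy
      simp only at hxy
      by_contra hne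
      obtain ⟨e, ⟨he, hx, hy⟩, -⟩ := hpair x y hne
      set ee : {e // e ∈ E} := ⟨e, he⟩ with hee
      have hdeg : (stsGraph E).degree (Sum.inr (Sum.inr ee)) = 3 := by
        rw [degree_W]; exact hcard e he
      have h2 : 2 ≤ (stsGraph E).degree (Sum.inr (Sum.inr ee)) := by omega
      have hm := hmac.2 _ h2 (c (Sum.inl x) + c (Sum.inr (Sum.inr ee)))
      rw [hdeg] at hm
      have hsub : ({Sum.inr (Sum.inl ⟨ee, ⟨x, hx⟩⟩), Sum.inr (Sum.inl ⟨ee, ⟨y, hy⟩⟩)} :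
            Finset (StsVert E)) ⊆
          ((stsGraph E).neighborFinset (Sum.inr (Sum.inr ee))).filter
            (fun v => sc (stsGraph E) c v = c (Sum.inl x) + c (Sum.inr (Sum.inr ee))) := by
        intro a ha
        erw [mem_insert, mem_singleton] at ha
        rw [mem_filter, nbhd_W]
        rcases ha with rfl | rfl
        · exact ⟨Finset.mem_image_of_mem _ (mem_univ _), by rw [sc_V]⟩
        · refine ⟨Finset.mem_image_of_mem _ (mem_univ _), ?_⟩
          rw [sc_V]
          congr 1
          exact hxy.symm
      have hpc : ({Sum.inr (Sum.inl ⟨ee, ⟨x, hx⟩⟩), Sum.inr (Sum.inl ⟨ee, ⟨y, hy⟩⟩)} :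
          Finset (StsVert E)).card = 2 := by
        erw [Finset.card_insert_of_notMem
          (fun h => hne (by simpa using Finset.mem_singleton.mp h)), Finset.card_singleton]
      have := Finset.card_le_card hsub
      omega
    refine ⟨hinj, ?_⟩
    have hcle : Fintype.card (Fin n) ≤ Fintype.card (Finset.Icc 1 k) := by
      apply Fintype.card_le_of_injective (fun x => ⟨c (Sum.inl x), hmac.1 _⟩)
      intro a b h
      exact hinj (Subtype.mk.inj h)
    simpa [Nat.card_Icc] using hcle
  · have hEd : ∀ x, (stsGraph E).degree (Sum.inl x) = (n - 1) / 2 := by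
      intro x; rw [degree_U]; have := count_edges hcard hpair x; omega
    have hub : (stsGraph E).maxDegree ≤ (n - 1) / 2 := by
      apply SimpleGraph.maxDegree_le_of_forall_degree_le
      rintro (x | (⟨e, y⟩ | e))
      · exact (hEd x).le
      · rw [degree_V]; omega
      · rw [degree_W, hcard e.val e.2]; omega
    have hlb : (n - 1) / 2 ≤ (stsGraph E).maxDegree := by
      rw [← hEd ⟨0, by omega⟩]
      exact SimpleGraph.degree_le_maxDegree _ _
    omega
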